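/- arXiv:2103.14418 — 4 statements merged into one kernel-verified Lean document; each statement's English description precedes it below -/
import Mathlib

section
/- Let Γ be a smooth second order differential equation (SODE) vector field on the tangent bundle TQ of a smooth manifold Q, and let q₀ ∈ Q. Then there exist a sufficiently small h₀ > 0 and, for each 0 < h ≤ h₀, a tangent vector v(h,q₀) ∈ T_{q₀}Q such that the trajectory of Γ with initial velocity v(h,q₀) is defined on [0,h] and returns to q₀ at time h: its base curve σ satisfies σ(0) = q₀ and σ(h) = q₀. -/
open Set Metric Function

open scoped NNReal
open scoped Interval
set_option linter.unusedSectionVars false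

namespace Stmt3Aux
variable {E : Type*} [NormedAddCommGroup E] [NormedSpace ℝ E] [FiniteDimensional ℝ E]

lemma abs_le_of_mem_uIoc {t x : ℝ} (hx : x ∈ Ι (0:ℝ) t) : |x| ≤ |t| := by
  rcases Set.mem_uIoc.mp hx with ⟨h1, h2⟩ | ⟨h1, h2⟩ <;> rw [abs_le] <;>
    constructor <;> nlinarith [le_abs_self t, neg_abs_le t, abs_nonneg t]

noncomputable def ext (h : ℝ) (hh : 0 ≤ h) (u : C(Icc (0:ℝ) h, E)) : ℝ → E :=
  fun s => u (projIcc 0 h hh s)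

lemma cont_ext (h : ℝ) (hh : 0 ≤ h) (u : C(Icc (0:ℝ) h, E)) : Continuous (ext h hh u) :=
  u.continuous.comp continuous_projIcc

lemma ext_sub_le (h : ℝ) (hh : 0 ≤ h) (u u' : C(Icc (0:ℝ) h, E)) (s : ℝ) :
    ‖ext h hh u s - ext h hh u' s‖ ≤ dist u u' := by
  rw [← dist_eq_norm]; exact ContinuousMap.dist_apply_le_dist _

noncomputable def sig (q₀ : E) (h : ℝ) (hh : 0 ≤ h) (u : C(Icc (0:ℝ) h, E)) : ℝ → E :=
  fun t => q₀ + ∫ s in (0:ℝ)..t, ext h hh u s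

lemma cont_sig (q₀ : E) (h : ℝ) (hh : 0 ≤ h) (u : C(Icc (0:ℝ) h, E)) :
    Continuous (sig q₀ h hh u) :=
  continuous_const.add
    (intervalIntegral.continuous_primitive (fun a b => (cont_ext h hh u).intervalIntegrable a b) 0)

lemma norm_integral_sub_le {f g : ℝ → E} (hf : Continuous f) (hg : Continuous g) {d t : ℝ}
    (hb : ∀ x ∈ Ι (0:ℝ) t, ‖f x - g x‖ ≤ d) :
    ‖(∫ s in (0:ℝ)..t, f s) - ∫ s in (0:ℝ)..t, g s‖ ≤ d * |t| := by
  rw [← intervalIntegral.integral_sub (hf.intervalIntegrable 0 t) (hg.intervalIntegrable 0 t)]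
  simpa using intervalIntegral.norm_integral_le_of_norm_le_const hb

lemma sig_sub_le (q₀ : E) (h : ℝ) (hh : 0 ≤ h) (u u' : C(Icc (0:ℝ) h, E)) (t : ℝ) :
    ‖sig q₀ h hh u t - sig q₀ h hh u' t‖ ≤ dist u u' * |t| := by
  have : sig q₀ h hh u t - sig q₀ h hh u' t
      = (∫ s in (0:ℝ)..t, ext h hh u s) - ∫ s in (0:ℝ)..t, ext h hh u' s := by
    simp [sig]
  rw [this]
  exact norm_integral_sub_le (cont_ext h hh u) (cont_ext h hh u')
    (fun x _ => ext_sub_le h hh u u' x)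

noncomputable def FF (ψ : E × E → E) (q₀ : E) (h : ℝ) (hh : 0 ≤ h)
    (u : C(Icc (0:ℝ) h, E)) : ℝ → E :=
  fun s => ψ (sig q₀ h hh u s, ext h hh u s)

lemma cont_FF (ψ : E × E → E) (hc : Continuous ψ) (q₀ : E) (h : ℝ) (hh : 0 ≤ h)
    (u : C(Icc (0:ℝ) h, E)) : Continuous (FF ψ q₀ h hh u) :=
  hc.comp ((cont_sig q₀ h hh u).prodMk (cont_ext h hh u))

lemma FF_sub_le (ψ : E × E → E) {K : ℝ≥0} (hψ : LipschitzWith K ψ) (q₀ : E) (h : ℝ)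
    (hh : 0 ≤ h) (u u' : C(Icc (0:ℝ) h, E)) {s : ℝ} (hs : |s| ≤ 1) :
    ‖FF ψ q₀ h hh u s - FF ψ q₀ h hh u' s‖ ≤ (K : ℝ) * dist u u' := by
  have hd := hψ.dist_le_mul (sig q₀ h hh u s, ext h hh u s) (sig q₀ h hh u' s, ext h hh u' s)
  rw [Prod.dist_eq] at hd
  rw [← dist_eq_norm]
  refine hd.trans (mul_le_mul_of_nonneg_left (max_le ?_ ?_) K.coe_nonneg)
  · rw [dist_eq_norm]
    calc ‖sig q₀ h hh u s - sig q₀ h hh u' s‖ ≤ dist u u' * |s| := sig_sub_le q₀ h hh u u' s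
      _ ≤ dist u u' * 1 := mul_le_mul_of_nonneg_left hs dist_nonneg
      _ = dist u u' := mul_one _
  · rw [dist_eq_norm]; exact ext_sub_le h hh u u' s

noncomputable def GG (ψ : E × E → E) (q₀ : E) (h : ℝ) (hh : 0 ≤ h)
    (u : C(Icc (0:ℝ) h, E)) : ℝ → E :=
  fun t => ∫ s in (0:ℝ)..t, FF ψ q₀ h hh u s

lemma cont_GG (ψ : E × E → E) (hc : Continuous ψ) (q₀ : E) (h : ℝ) (hh : 0 ≤ h)
    (u : C(Icc (0:ℝ) h, E)) : Continuous (GG ψ q₀ h hh u) :=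
  intervalIntegral.continuous_primitive
    (fun a b => (cont_FF ψ hc q₀ h hh u).intervalIntegrable a b) 0

lemma GG_sub_le (ψ : E × E → E) {K : ℝ≥0} (hψ : LipschitzWith K ψ) (q₀ : E) (h : ℝ)
    (hh : 0 ≤ h) (u u' : C(Icc (0:ℝ) h, E)) {t : ℝ} (ht : |t| ≤ 1) :
    ‖GG ψ q₀ h hh u t - GG ψ q₀ h hh u' t‖ ≤ (K : ℝ) * dist u u' * |t| := by
  exact norm_integral_sub_le (cont_FF ψ hψ.continuous q₀ h hh u)
    (cont_FF ψ hψ.continuous q₀ h hh u')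
    (fun x hx => FF_sub_le ψ hψ q₀ h hh u u' ((abs_le_of_mem_uIoc hx).trans ht))

noncomputable def vv (ψ : E × E → E) (q₀ : E) (h : ℝ) (hh : 0 ≤ h)
    (u : C(Icc (0:ℝ) h, E)) : E :=
  (-h⁻¹) • ∫ s in (0:ℝ)..h, GG ψ q₀ h hh u s

lemma vv_sub_le (ψ : E × E → E) {K : ℝ≥0} (hψ : LipschitzWith K ψ) (q₀ : E) {h : ℝ}
    (hh : 0 < h) (h1 : h ≤ 1) (u u' : C(Icc (0:ℝ) h, E)) :
    ‖vv ψ q₀ h hh.le u - vv ψ q₀ h hh.le u'‖ ≤ (K : ℝ) * dist u u' * h := by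
  have key : ‖(∫ s in (0:ℝ)..h, GG ψ q₀ h hh.le u s) - ∫ s in (0:ℝ)..h, GG ψ q₀ h hh.le u' s‖
      ≤ (K : ℝ) * dist u u' * h * |h| := by
    refine norm_integral_sub_le (cont_GG ψ hψ.continuous q₀ h hh.le u)
      (cont_GG ψ hψ.continuous q₀ h hh.le u') (fun x hx => ?_)
    have hx1 : |x| ≤ |h| := abs_le_of_mem_uIoc hx
    rw [abs_of_pos hh] at hx1
    have := GG_sub_le ψ hψ q₀ h hh.le u u' (t := x) (hx1.trans h1)
    calc ‖GG ψ q₀ h hh.le u x - GG ψ q₀ h hh.le u' x‖ ≤ (K : ℝ) * dist u u' * |x| := this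
      _ ≤ (K : ℝ) * dist u u' * h :=
        mul_le_mul_of_nonneg_left hx1 (by positivity)
  have : vv ψ q₀ h hh.le u - vv ψ q₀ h hh.le u'
      = (-h⁻¹) • ((∫ s in (0:ℝ)..h, GG ψ q₀ h hh.le u s)
        - ∫ s in (0:ℝ)..h, GG ψ q₀ h hh.le u' s) := by
    rw [smul_sub]; rfl
  rw [this, norm_smul]
  rw [abs_of_pos hh] at key
  calc ‖(-h⁻¹ : ℝ)‖ * ‖_‖ ≤ h⁻¹ * ((K : ℝ) * dist u u' * h * h) := by
        refine mul_le_mul ?_ key (norm_nonneg _) (by positivity)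
        rw [Real.norm_eq_abs, abs_neg, abs_of_pos (by positivity)]
    _ = (K : ℝ) * dist u u' * h := by field_simp


noncomputable def TT (ψ : E × E → E) (hc : Continuous ψ) (q₀ : E) (h : ℝ) (hh : 0 ≤ h)
    (u : C(Icc (0:ℝ) h, E)) : C(Icc (0:ℝ) h, E) :=
  ⟨fun t => vv ψ q₀ h hh u + GG ψ q₀ h hh u t,
    continuous_const.add ((cont_GG ψ hc q₀ h hh u).comp continuous_subtype_val)⟩

lemma TT_dist_le (ψ : E × E → E) {K : ℝ≥0} (hψ : LipschitzWith K ψ) (q₀ : E) {h : ℝ}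
    (hh : 0 < h) (h1 : h ≤ 1) (u u' : C(Icc (0:ℝ) h, E)) :
    dist (TT ψ hψ.continuous q₀ h hh.le u) (TT ψ hψ.continuous q₀ h hh.le u')
      ≤ 2 * (K : ℝ) * h * dist u u' := by
  rw [ContinuousMap.dist_le (by positivity)]
  rintro ⟨t, ht0, hth⟩
  have habs : |t| ≤ h := by rw [abs_of_nonneg ht0]; exact hth
  have hG := GG_sub_le ψ hψ q₀ h hh.le u u' (t := t) (habs.trans h1)
  have hv := vv_sub_le ψ hψ q₀ hh h1 u u'
  simp only [TT, ContinuousMap.coe_mk]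
  rw [dist_eq_norm]
  calc ‖vv ψ q₀ h hh.le u + GG ψ q₀ h hh.le u t
        - (vv ψ q₀ h hh.le u' + GG ψ q₀ h hh.le u' t)‖
      ≤ ‖vv ψ q₀ h hh.le u - vv ψ q₀ h hh.le u'‖
        + ‖GG ψ q₀ h hh.le u t - GG ψ q₀ h hh.le u' t‖ := by
        rw [add_sub_add_comm]; exact norm_add_le _ _
    _ ≤ (K : ℝ) * dist u u' * h + (K : ℝ) * dist u u' * |t| := add_le_add hv hG
    _ ≤ (K : ℝ) * dist u u' * h + (K : ℝ) * dist u u' * h := by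
        refine add_le_add le_rfl (mul_le_mul_of_nonneg_left habs (by positivity))
    _ = 2 * (K : ℝ) * h * dist u u' := by ring

lemma key (ψ : E × E → E) (K : ℝ≥0) (hψ : LipschitzWith K ψ) (q₀ : E) {h : ℝ}
    (hh : 0 < h) (h1 : h ≤ 1) (hKh : 2 * (K : ℝ) * h ≤ 2⁻¹)
    (hCh : 4 * ‖ψ (q₀, 0)‖ * h ≤ 1) :
    ∃ σ w : ℝ → E, σ 0 = q₀ ∧ σ h = q₀ ∧
      (∀ t ∈ Icc (0:ℝ) h, HasDerivWithinAt σ (w t) (Icc 0 h) t) ∧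
      (∀ t ∈ Icc (0:ℝ) h, HasDerivWithinAt w (ψ (σ t, w t)) (Icc 0 h) t) ∧
      (∀ t ∈ Icc (0:ℝ) h, (σ t, w t) ∈ closedBall ((q₀, 0) : E × E) 1) := by
  classical
  set Cψ := ‖ψ (q₀, (0:E))‖ with hCψdef
  have hCψ0 : 0 ≤ Cψ := norm_nonneg _
  haveI : Nonempty C(Icc (0:ℝ) h, E) := ⟨0⟩
  set Tm : C(Icc (0:ℝ) h, E) → C(Icc (0:ℝ) h, E) := TT ψ hψ.continuous q₀ h hh.le with hTm
  -- contraction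
  have hTlip : LipschitzWith 2⁻¹ Tm := by
    refine LipschitzWith.of_dist_le_mul fun u u' => ?_
    have := TT_dist_le ψ hψ q₀ hh h1 u u'
    refine this.trans ?_
    have : 2 * (K : ℝ) * h * dist u u' ≤ 2⁻¹ * dist u u' :=
      mul_le_mul_of_nonneg_right hKh dist_nonneg
    simpa using this
  have hcontr : ContractingWith 2⁻¹ Tm := ⟨by rw [← NNReal.coe_lt_coe]; norm_num, hTlip⟩
  set W : C(Icc (0:ℝ) h, E) := ContractingWith.fixedPoint Tm hcontr with hWdef
  have hfix : Tm W = W := hcontr.fixedPoint_isFixedPt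
  -- basic computations for u = 0
  have hext0 : ∀ s : ℝ, ext h hh.le (0 : C(Icc (0:ℝ) h, E)) s = 0 := fun s => rfl
  have hsig0 : ∀ s : ℝ, sig q₀ h hh.le (0 : C(Icc (0:ℝ) h, E)) s = q₀ := by
    intro s
    simp [sig, hext0]
  have hFF0 : ∀ s : ℝ, FF ψ q₀ h hh.le (0 : C(Icc (0:ℝ) h, E)) s = ψ (q₀, 0) := by
    intro s; rw [FF, hsig0, hext0]
  have hGG0 : ∀ t : ℝ, ‖GG ψ q₀ h hh.le (0 : C(Icc (0:ℝ) h, E)) t‖ ≤ Cψ * |t| := by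
    intro t
    have := intervalIntegral.norm_integral_le_of_norm_le_const
      (f := FF ψ q₀ h hh.le (0 : C(Icc (0:ℝ) h, E))) (a := 0) (b := t) (C := Cψ)
      (fun x _ => by rw [hFF0])
    simpa [GG] using this
  have hT0 : dist (Tm 0) 0 ≤ 2 * Cψ * h := by
    rw [ContinuousMap.dist_le (by positivity)]
    rintro ⟨t, ht0, hth⟩
    have habs : |t| ≤ h := by rw [abs_of_nonneg ht0]; exact hth
    have hvv0 : ‖vv ψ q₀ h hh.le (0 : C(Icc (0:ℝ) h, E))‖ ≤ Cψ * h := by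
      rw [vv, norm_smul]
      have hint : ‖∫ s in (0:ℝ)..h, GG ψ q₀ h hh.le (0 : C(Icc (0:ℝ) h, E)) s‖
          ≤ Cψ * h * |h| := by
        have hb : ∀ x ∈ Ι (0:ℝ) h, ‖GG ψ q₀ h hh.le (0 : C(Icc (0:ℝ) h, E)) x‖ ≤ Cψ * h :=
          fun x hx => (hGG0 x).trans (mul_le_mul_of_nonneg_left
            (by rw [← abs_of_pos hh]; exact abs_le_of_mem_uIoc hx) hCψ0)
        have := intervalIntegral.norm_integral_le_of_norm_le_const hb
        simpa using this
      calc ‖(-h⁻¹ : ℝ)‖ * ‖∫ s in (0:ℝ)..h, GG ψ q₀ h hh.le (0 : C(Icc (0:ℝ) h, E)) s‖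
          ≤ h⁻¹ * (Cψ * h * |h|) := by
            refine mul_le_mul ?_ hint (norm_nonneg _) (by positivity)
            rw [Real.norm_eq_abs, abs_neg, abs_of_pos (by positivity)]
        _ = Cψ * h := by rw [abs_of_pos hh]; field_simp
    simp only [Tm, TT, ContinuousMap.coe_mk, ContinuousMap.zero_apply, dist_eq_norm, sub_zero]
    calc ‖vv ψ q₀ h hh.le 0 + GG ψ q₀ h hh.le 0 t‖
        ≤ ‖vv ψ q₀ h hh.le (0 : C(Icc (0:ℝ) h, E))‖
          + ‖GG ψ q₀ h hh.le (0 : C(Icc (0:ℝ) h, E)) t‖ := norm_add_le _ _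
      _ ≤ Cψ * h + Cψ * |t| := add_le_add hvv0 (hGG0 t)
      _ ≤ Cψ * h + Cψ * h := add_le_add le_rfl (mul_le_mul_of_nonneg_left habs hCψ0)
      _ = 2 * Cψ * h := by ring
  -- bound on the fixed point
  have hWbound : dist W (0 : C(Icc (0:ℝ) h, E)) ≤ 4 * Cψ * h := by
    have h2 : dist W (0 : C(Icc (0:ℝ) h, E)) ≤ 2 * (K : ℝ) * h * dist W 0 + 2 * Cψ * h := by
      calc dist W (0 : C(Icc (0:ℝ) h, E)) = dist (Tm W) 0 := by rw [hfix]
        _ ≤ dist (Tm W) (Tm 0) + dist (Tm 0) 0 := dist_triangle _ _ _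
        _ ≤ 2 * (K : ℝ) * h * dist W 0 + 2 * Cψ * h :=
            add_le_add (TT_dist_le ψ hψ q₀ hh h1 W 0) hT0
    have h3 : 2 * (K : ℝ) * h * dist W 0 ≤ 2⁻¹ * dist W 0 :=
      mul_le_mul_of_nonneg_right hKh dist_nonneg
    have := dist_nonneg (x := W) (y := (0 : C(Icc (0:ℝ) h, E)))
    linarith
  -- the solution
  refine ⟨sig q₀ h hh.le W, ext h hh.le W, ?_, ?_, ?_, ?_, ?_⟩
  · simp [sig]
  · -- σ h = q₀
    have hagree : ∀ s ∈ Icc (0:ℝ) h,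
        ext h hh.le W s = vv ψ q₀ h hh.le W + GG ψ q₀ h hh.le W s := by
      intro s hs
      have hp : projIcc 0 h hh.le s = ⟨s, hs⟩ := projIcc_of_mem hh.le hs
      calc ext h hh.le W s = W ⟨s, hs⟩ := by rw [ext, hp]
        _ = (Tm W) ⟨s, hs⟩ := by rw [hfix]
        _ = vv ψ q₀ h hh.le W + GG ψ q₀ h hh.le W s := rfl
    have hcongr : (∫ s in (0:ℝ)..h, ext h hh.le W s)
        = ∫ s in (0:ℝ)..h, (vv ψ q₀ h hh.le W + GG ψ q₀ h hh.le W s) := by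
      refine intervalIntegral.integral_congr fun s hs => ?_
      exact hagree s (by rwa [uIcc_of_le hh.le] at hs)
    have hint : (∫ s in (0:ℝ)..h, ext h hh.le W s) = 0 := by
      rw [hcongr, intervalIntegral.integral_add intervalIntegrable_const
        ((cont_GG ψ hψ.continuous q₀ h hh.le W).intervalIntegrable 0 h),
        intervalIntegral.integral_const, vv, smul_smul]
      have : (h - 0) * (-h⁻¹) = -1 := by field_simp; ring
      rw [this, neg_one_smul, neg_add_cancel]
    rw [sig, hint, add_zero]
  · -- first derivative
    intro t ht
    exact (((cont_ext h hh.le W).integral_hasStrictDerivAt 0 t).hasDerivAt.const_add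
      q₀).hasDerivWithinAt
  · -- second derivative
    intro t ht
    have hagree : ∀ s ∈ Icc (0:ℝ) h,
        ext h hh.le W s = vv ψ q₀ h hh.le W + GG ψ q₀ h hh.le W s := by
      intro s hs
      have hp : projIcc 0 h hh.le s = ⟨s, hs⟩ := projIcc_of_mem hh.le hs
      calc ext h hh.le W s = W ⟨s, hs⟩ := by rw [ext, hp]
        _ = (Tm W) ⟨s, hs⟩ := by rw [hfix]
        _ = vv ψ q₀ h hh.le W + GG ψ q₀ h hh.le W s := rfl
    have hg : HasDerivAt (fun s => vv ψ q₀ h hh.le W + GG ψ q₀ h hh.le W s)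
        (FF ψ q₀ h hh.le W t) t :=
      (((cont_FF ψ hψ.continuous q₀ h hh.le W).integral_hasStrictDerivAt 0 t).hasDerivAt).const_add
        (vv ψ q₀ h hh.le W)
    exact (hg.hasDerivWithinAt).congr hagree (hagree t ht)
  · -- stays in the ball
    intro t ht
    obtain ⟨ht0, hth⟩ := ht
    have habs : |t| ≤ h := by rw [abs_of_nonneg ht0]; exact hth
    have hWle1 : dist W (0 : C(Icc (0:ℝ) h, E)) ≤ 1 := hWbound.trans (by linarith)
    have hwpt : ∀ s : ℝ, ‖ext h hh.le W s - 0‖ ≤ dist W 0 := fun s => ext_sub_le h hh.le W 0 s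
    rw [mem_closedBall, Prod.dist_eq]
    refine max_le ?_ ?_
    · rw [dist_eq_norm]
      calc ‖sig q₀ h hh.le W t - q₀‖ = ‖sig q₀ h hh.le W t - sig q₀ h hh.le (0:C(Icc (0:ℝ) h, E)) t‖ := by
            rw [hsig0]
        _ ≤ dist W 0 * |t| := sig_sub_le q₀ h hh.le W 0 t
        _ ≤ 1 * 1 := mul_le_mul hWle1 (habs.trans h1) (abs_nonneg t) zero_le_one
        _ = 1 := one_mul _
    · rw [dist_eq_norm]
      calc ‖ext h hh.le W t - 0‖ ≤ dist W 0 := hwpt t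
        _ ≤ 1 := hWle1


lemma cutoff (ξ : E → E → E) (hξ : ContDiff ℝ (⊤ : ℕ∞) (fun p : E × E => ξ p.1 p.2)) (q₀ : E) :
    ∃ (K : ℝ≥0) (ψ : E × E → E), LipschitzWith K ψ ∧
      ∀ p ∈ closedBall ((q₀, 0) : E × E) 1, ψ p = ξ p.1 p.2 := by
  let b : ContDiffBump ((q₀, (0:E)) : E × E) := ⟨1, 2, one_pos, one_lt_two⟩
  set ψ : E × E → E := fun p => b p • ξ p.1 p.2 with hψdef
  have hξ1 : ContDiff ℝ 1 (fun p : E × E => ξ p.1 p.2) := hξ.of_le (by simp)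
  have hb1 : ContDiff ℝ 1 (fun p : E × E => b p) := by exact_mod_cast b.contDiff (n := 1)
  have hcd : ContDiff ℝ 1 ψ := hb1.smul hξ1
  have hsupp : HasCompactSupport ψ := b.hasCompactSupport.smul_right
  obtain ⟨K, hK⟩ := hcd.lipschitzWith_of_hasCompactSupport hsupp one_ne_zero
  refine ⟨K, ψ, hK, fun p hp => ?_⟩
  have hb : b p = 1 := b.one_of_mem_closedBall hp
  rw [hψdef]
  simp only [hb, one_smul]

end Stmt3Aux


open Stmt3Aux

/-- Theorem 2.1, local convexity for a standard SODE.
In local coordinates a SODE `Γ` on a manifold `Q` is determined by its force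
function `ξ : TQ ≅ E × E → E`, `Γ(q,v) = v ∂/∂q + ξ(q,v) ∂/∂v`, and a trajectory
of `Γ` is a curve `σ` with `σ̈ = ξ(σ, σ̇)`.  Given a point `q₀`, there is a
sufficiently small `h₀ > 0` such that for every `0 < h ≤ h₀` there exists a
tangent vector `v` at `q₀` whose trajectory is defined on `[0,h]` and returns
to `q₀` at time `h`. -/
theorem stmt_3 (E : Type*) [NormedAddCommGroup E] [NormedSpace ℝ E] [FiniteDimensional ℝ E]
    (ξ : E → E → E) (hξ : ContDiff ℝ (⊤ : ℕ∞) (fun p : E × E => ξ p.1 p.2)) (q₀ : E) :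
    ∃ h₀ > (0:ℝ), ∀ h : ℝ, 0 < h → h ≤ h₀ →
      ∃ v : E, ∃ σ w : ℝ → E,
        σ 0 = q₀ ∧ w 0 = v ∧ σ h = q₀ ∧
        (∀ t ∈ Icc (0:ℝ) h, HasDerivWithinAt σ (w t) (Icc 0 h) t) ∧
        (∀ t ∈ Icc (0:ℝ) h, HasDerivWithinAt w (ξ (σ t) (w t)) (Icc 0 h) t) := by
  obtain ⟨K, ψ, hψ, heq⟩ := cutoff ξ hξ q₀
  set Cψ : ℝ := ‖ψ (q₀, (0:E))‖ with hCψ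
  refine ⟨min 1 (min (1 / (4 * ((K : ℝ) + 1))) (1 / (4 * (Cψ + 1)))), by positivity, ?_⟩
  intro h hh hh0
  have h1 : h ≤ 1 := hh0.trans (min_le_left _ _)
  have hK' : h ≤ 1 / (4 * ((K : ℝ) + 1)) :=
    hh0.trans ((min_le_right _ _).trans (min_le_left _ _))
  have hC' : h ≤ 1 / (4 * (Cψ + 1)) :=
    hh0.trans ((min_le_right _ _).trans (min_le_right _ _))
  have hKnn : (0:ℝ) ≤ (K : ℝ) := K.coe_nonneg
  have hCnn : (0:ℝ) ≤ Cψ := norm_nonneg _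
  rw [le_div_iff₀ (by positivity)] at hK' hC'
  have hKh : 2 * (K : ℝ) * h ≤ 2⁻¹ := by nlinarith
  have hCh : 4 * ‖ψ (q₀, (0:E))‖ * h ≤ 1 := by rw [← hCψ]; nlinarith
  obtain ⟨σ, w, hσ0, hσh, hd1, hd2, hball⟩ := key ψ K hψ q₀ hh h1 hKh hCh
  refine ⟨w 0, σ, w, hσ0, rfl, hσh, hd1, fun t ht => ?_⟩
  have := hd2 t ht
  rwa [heq _ (hball t ht)] at this
end

section
/- Let Γ be a SODE on Q, h > 0, D^Γ_h = {v ∈ TQ : the flow of Γ is defined at time h starting at v}, and exp^Γ_h : D^Γ_h → Q × Q given by exp^Γ_h(v) = (τ_Q(v), τ_Q(Φ^Γ_h(v))). If v ∈ D^Γ_h is such that the fiberwise exponential exp^Γ_{(h,τ_Q(v))} : D^Γ_{(h,τ_Q(v))} ⊆ T_{τ_Q(v)}Q → Q is non-singular at v, then exp^Γ_h is non-singular at v, i.e., T_v(exp^Γ_h) is a linear isomorphism. -/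
open Set Metric Function

/-- Lemma 2.3.
In local coordinates, `TQ = E × E`, a SODE is given by a smooth force function
`ξ : E × E → E`, and `Φh : D^Γ_h → E × E` is its time-`h` flow (hypothesis `htraj`).
The exponential `exp^Γ_h(v) = (τ_Q(v), τ_Q(Φ^Γ_h v))` is the map
`a ↦ (a.1, (Φh a).1)`.  If the fiberwise exponential
`exp^Γ_{(h,q₀)} = (v ↦ (Φh (q₀, v)).1)` is non-singular at `v₀`, then `exp^Γ_h`
is non-singular at `(q₀, v₀)`, i.e. its tangent map there is a linear isomorphism. -/
theorem stmt_5 (E : Type*) [NormedAddCommGroup E] [NormedSpace ℝ E] [FiniteDimensional ℝ E]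
    (ξ : E → E → E) (hξ : ContDiff ℝ (⊤ : ℕ∞) (fun p : E × E => ξ p.1 p.2))
    (h : ℝ) (hh : 0 < h) (D : Set (E × E)) (hD : IsOpen D)
    (Φh : E × E → E × E) (hΦs : ContDiffOn ℝ (⊤ : ℕ∞) Φh D)
    -- `Φh` is the time-`h` flow of the SODE determined by `ξ`
    (htraj : ∀ a ∈ D, ∃ σ w : ℝ → E,
      σ 0 = a.1 ∧ w 0 = a.2 ∧
      (∀ t ∈ Icc (0:ℝ) h, HasDerivAt σ (w t) t ∧ HasDerivAt w (ξ (σ t) (w t)) t) ∧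
      Φh a = (σ h, w h))
    (q₀ v₀ : E) (ha : (q₀, v₀) ∈ D)
    (hfiber : Function.Bijective (fderiv ℝ (fun v : E => (Φh (q₀, v)).1) v₀)) :
    Function.Bijective (fderiv ℝ (fun a : E × E => (a.1, (Φh a).1)) (q₀, v₀)) := by
  have hd : DifferentiableAt ℝ Φh (q₀, v₀) :=
    (hΦs.contDiffAt (hD.mem_nhds ha)).differentiableAt (by simp)
  set A : E × E →L[ℝ] E :=
    (ContinuousLinearMap.fst ℝ E E).comp (fderiv ℝ Φh (q₀, v₀)) with hA
  have hF : HasFDerivAt (fun a : E × E => (a.1, (Φh a).1))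
      ((ContinuousLinearMap.fst ℝ E E).prod A) (q₀, v₀) :=
    HasFDerivAt.prodMk (hasFDerivAt_fst) (hd.hasFDerivAt.fst)
  have hG : HasFDerivAt (fun v : E => (Φh (q₀, v)).1)
      (A.comp (ContinuousLinearMap.inr ℝ E E)) v₀ :=
    (hd.hasFDerivAt.fst).comp v₀ (hasFDerivAt_prodMk_right q₀ v₀)
  rw [hG.fderiv] at hfiber
  rw [hF.fderiv]
  set B := A.comp (ContinuousLinearMap.inr ℝ E E) with hB
  have hsplit : ∀ p : E × E, A p = A (p.1, 0) + B p.2 := by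
    intro p
    rw [hB]
    simp only [ContinuousLinearMap.comp_apply, ContinuousLinearMap.inr_apply]
    rw [← A.map_add]
    simp
  constructor
  · intro p p' hpp'
    simp only [ContinuousLinearMap.prod_apply, ContinuousLinearMap.coe_fst',
      Prod.mk.injEq] at hpp'
    obtain ⟨h1, h2⟩ := hpp'
    have key : B p.2 = B p'.2 := by
      rw [hsplit p, hsplit p', h1] at h2
      exact add_left_cancel h2
    exact Prod.ext h1 (hfiber.1 key)
  · rintro ⟨x, y⟩
    obtain ⟨w, hw⟩ := hfiber.2 (y - A (x, 0))
    refine ⟨(x, w), ?_⟩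
    simp only [ContinuousLinearMap.prod_apply, ContinuousLinearMap.coe_fst']
    have := hsplit (x, w)
    simp only at this
    rw [this, hw]
    simp
end

section
/- Let Γ be a SODE on the vertical bundle Vπ of a surjective submersion π : Q → M, and let q₀ ∈ Q. Then locally there exists a standard SODE Γ̄ on an open set W ⊆ Q containing q₀ (a SODE on TW) such that Γ̄ agrees with Γ on TW ∩ Vπ; moreover every trajectory σ̄ : [0,h] → W of Γ̄ with π(σ̄(0)) = π(σ̄(h)) = m is entirely contained in π⁻¹(m) and is a trajectory of the restriction of Γ to T(π⁻¹(m)). -/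
open Set Metric Function

private lemma const_of_hasDerivAt_zero {E : Type*} [NormedAddCommGroup E] [NormedSpace ℝ E]
    {f : ℝ → E} {a b : ℝ} (hf : ∀ t ∈ Icc a b, HasDerivAt f 0 t) :
    ∀ t ∈ Icc a b, f t = f a :=
  constant_of_has_deriv_right_zero
    (fun t ht => (hf t ht).continuousAt.continuousWithinAt)
    (fun t ht => (hf t (Ico_subset_Icc_self ht)).hasDerivWithinAt)

/-- local extension of a SODE on `Vπ` to a standard SODE.
In the local model, `π : Q → M` is a smooth surjective submersion, the vertical
bundle is `Vπ = {(q,w) : fderiv ℝ π q w = 0} ⊆ TQ = Q × Q` and `Γ` is a (smooth)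
SODE on the Lie algebroid `Vπ` (tangent to `Vπ` with `(Γ a).1 = a.2` on `Vπ`).
For any `q₀ ∈ Q` there are an open neighbourhood `W` of `q₀` and a standard SODE
`Ξ` on `TW` (i.e. `(Ξ p).1 = p.2`) agreeing with `Γ` on `TW ∩ Vπ`, such that every
trajectory `σ : [0,h] → W` of `Ξ` with `π(σ(0)) = π(σ(h))` is entirely contained
in the fiber `π⁻¹(π(σ(0)))` and is a trajectory of the restriction of `Γ` to
`T(π⁻¹(π(σ 0)))` (in particular its velocity is vertical for all time). -/
theorem stmt_10 (Q M : Type*)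
    [NormedAddCommGroup Q] [NormedSpace ℝ Q] [FiniteDimensional ℝ Q]
    [NormedAddCommGroup M] [NormedSpace ℝ M] [FiniteDimensional ℝ M]
    (π : Q → M) (hπ : ContDiff ℝ (⊤ : ℕ∞) π) (hsurj : Function.Surjective π)
    (hsub : ∀ q : Q, Function.Surjective (fderiv ℝ π q))
    (Γ : Q × Q → Q × Q)
    (hΓs : ContDiffOn ℝ (⊤ : ℕ∞) Γ {p : Q × Q | fderiv ℝ π p.1 p.2 = 0})
    (hSODE : ∀ a ∈ {p : Q × Q | fderiv ℝ π p.1 p.2 = 0}, (Γ a).1 = a.2)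
    (htangent : ∀ a ∈ {p : Q × Q | fderiv ℝ π p.1 p.2 = 0},
      fderiv ℝ (fun p : Q × Q => fderiv ℝ π p.1 p.2) a (Γ a) = 0)
    (q₀ : Q) :
    ∃ W : Set Q, IsOpen W ∧ q₀ ∈ W ∧
      ∃ Ξ : Q × Q → Q × Q,
        ContDiffOn ℝ (⊤ : ℕ∞) Ξ (W ×ˢ (univ : Set Q)) ∧
        -- `Ξ` is a standard SODE on `TW`
        (∀ p ∈ W ×ˢ (univ : Set Q), (Ξ p).1 = p.2) ∧
        -- `Ξ` agrees with `Γ` on `TW ∩ Vπ`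
        (∀ a ∈ (W ×ˢ (univ : Set Q)) ∩ {p : Q × Q | fderiv ℝ π p.1 p.2 = 0}, Ξ a = Γ a) ∧
        -- closed trajectories of `Ξ` over `M` stay in a single fiber and are
        -- trajectories of `Γ` restricted to the tangent bundle of that fiber
        (∀ h : ℝ, 0 < h → ∀ σ w : ℝ → Q,
          (∀ t ∈ Icc (0:ℝ) h, σ t ∈ W) →
          (∀ t ∈ Icc (0:ℝ) h,
            HasDerivAt σ (w t) t ∧ HasDerivAt w ((Ξ (σ t, w t)).2) t) →
          π (σ 0) = π (σ h) →
          (∀ t ∈ Icc (0:ℝ) h, π (σ t) = π (σ 0)) ∧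
          (∀ t ∈ Icc (0:ℝ) h, fderiv ℝ π (σ t) (w t) = 0) ∧
          (∀ t ∈ Icc (0:ℝ) h, HasDerivAt w ((Γ (σ t, w t)).2) t)) := by

  classical
  have hπd : Differentiable ℝ π := hπ.differentiable (by simp)
  set Dπ : Q → (Q →L[ℝ] M) := fderiv ℝ π with hDπdef
  have hDπ : ContDiff ℝ (⊤ : ℕ∞) Dπ := hπ.fderiv_right (by simp)
  set D2 : Q → (Q →L[ℝ] Q →L[ℝ] M) := fderiv ℝ Dπ with hD2def
  have hD2 : ContDiff ℝ (⊤ : ℕ∞) D2 := hDπ.fderiv_right (by simp)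
  -- a continuous linear right inverse of `Dπ q₀`
  obtain ⟨S₀, hS₀⟩ := (Dπ q₀).toLinearMap.exists_rightInverse_of_surjective
      (LinearMap.range_eq_top.2 (hsub q₀))
  set S : M →L[ℝ] Q := LinearMap.toContinuousLinearMap S₀ with hSdef
  have hS : ∀ m : M, Dπ q₀ (S m) = m := fun m => LinearMap.congr_fun hS₀ m
  set e : Q → (M →L[ℝ] M) := fun q => (Dπ q).comp S with hedef
  have he : ContDiff ℝ (⊤ : ℕ∞) e := hDπ.clm_comp contDiff_const
  set W : Set Q := e ⁻¹' {x | IsUnit x} with hWdef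
  have hWopen : IsOpen W := Units.isOpen.preimage he.continuous
  have hq₀W : q₀ ∈ W := by
    have h1 : e q₀ = 1 := by
      ext m; simpa [hedef] using hS m
    show IsUnit (e q₀)
    rw [h1]; exact isUnit_one
  set inv : Q → (M →L[ℝ] M) := fun q => Ring.inverse (e q) with hinvdef
  have hinvcd : ContDiffOn ℝ (⊤ : ℕ∞) inv W := by
    intro q hq
    have hu : IsUnit (e q) := hq
    have h1 : ContDiffAt ℝ (⊤ : ℕ∞) (Ring.inverse : (M →L[ℝ] M) → (M →L[ℝ] M)) (e q) := by
      have := contDiffAt_ringInverse ℝ (n := (⊤ : ℕ∞)) hu.unit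
      rwa [hu.unit_spec] at this
    exact (h1.comp q he.contDiffAt).contDiffWithinAt
  set R : Q → (M →L[ℝ] Q) := fun q => S.comp (inv q) with hRdef
  have hRid : ∀ q ∈ W, ∀ m : M, Dπ q (R q m) = m := by
    intro q hq m
    have hu : IsUnit (e q) := hq
    have h1 : (e q) * (inv q) = 1 := Ring.mul_inverse_cancel _ hu
    have := congrArg (fun f : M →L[ℝ] M => f m) h1
    simpa [hedef, hRdef, ContinuousLinearMap.mul_apply] using this
  -- vertical projection and the extended force field
  set P : Q × Q → Q := fun p => p.2 - R p.1 (Dπ p.1 p.2) with hPdef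
  set F : Q × Q → Q := fun p =>
    (Γ (p.1, P p)).2 - R p.1 (Dπ p.1 ((Γ (p.1, P p)).2) + D2 p.1 p.2 p.2) with hFdef
  set Ξ : Q × Q → Q × Q := fun p => (p.2, F p) with hΞdef
  have hmemW : ∀ p : Q × Q, p ∈ W ×ˢ (univ : Set Q) → p.1 ∈ W := fun p hp => hp.1
  -- P lands in the vertical bundle
  have hPvert : ∀ p : Q × Q, p.1 ∈ W → Dπ p.1 (P p) = 0 := by
    intro p hp
    simp only [hPdef, map_sub]
    rw [hRid p.1 hp, sub_self]
  -- smoothness of Ξ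
  have hDπfst : ContDiffOn ℝ (⊤ : ℕ∞) (fun p : Q × Q => Dπ p.1) (W ×ˢ (univ : Set Q)) :=
    (hDπ.comp contDiff_fst).contDiffOn
  have hRon : ContDiffOn ℝ (⊤ : ℕ∞) (fun p : Q × Q => R p.1) (W ×ˢ (univ : Set Q)) :=
    ContDiffOn.clm_comp contDiffOn_const (hinvcd.comp contDiffOn_fst hmemW)
  have hPcd : ContDiffOn ℝ (⊤ : ℕ∞) P (W ×ˢ (univ : Set Q)) :=
    contDiffOn_snd.sub (hRon.clm_apply (hDπfst.clm_apply contDiffOn_snd))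
  have hGmap : MapsTo (fun p : Q × Q => (p.1, P p)) (W ×ˢ (univ : Set Q))
      {p : Q × Q | Dπ p.1 p.2 = 0} := fun p hp => hPvert p (hmemW p hp)
  have hGcd : ContDiffOn ℝ (⊤ : ℕ∞) (fun p : Q × Q => Γ (p.1, P p)) (W ×ˢ (univ : Set Q)) :=
    hΓs.comp (contDiffOn_fst.prodMk hPcd) hGmap
  have hG2cd : ContDiffOn ℝ (⊤ : ℕ∞) (fun p : Q × Q => (Γ (p.1, P p)).2) (W ×ˢ (univ : Set Q)) :=
    contDiff_snd.comp_contDiffOn hGcd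
  have hD2cd : ContDiffOn ℝ (⊤ : ℕ∞) (fun p : Q × Q => D2 p.1 p.2 p.2) (W ×ˢ (univ : Set Q)) :=
    (((hD2.comp contDiff_fst).contDiffOn).clm_apply contDiffOn_snd).clm_apply contDiffOn_snd
  have hFcd : ContDiffOn ℝ (⊤ : ℕ∞) F (W ×ˢ (univ : Set Q)) :=
    hG2cd.sub (hRon.clm_apply ((hDπfst.clm_apply hG2cd).add hD2cd))
  have hΞcd : ContDiffOn ℝ (⊤ : ℕ∞) Ξ (W ×ˢ (univ : Set Q)) := contDiffOn_snd.prodMk hFcd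
  -- key: Dπ q (F p) = - D2 q w w on W ×ˢ univ
  have hAF : ∀ p : Q × Q, p.1 ∈ W → Dπ p.1 (F p) = - D2 p.1 p.2 p.2 := by
    intro p hp
    simp only [hFdef, map_sub]
    rw [hRid p.1 hp]
    abel
  -- agreement with Γ on the vertical bundle
  have hagree : ∀ a ∈ (W ×ˢ (univ : Set Q)) ∩ {p : Q × Q | Dπ p.1 p.2 = 0}, Ξ a = Γ a := by
    intro a ha
    have haW : a.1 ∈ W := ha.1.1
    have hav : Dπ a.1 a.2 = 0 := ha.2
    have hPa : P a = a.2 := by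
      simp only [hPdef, hav, map_zero, sub_zero]
    have hpa : (a.1, P a) = a := by rw [hPa]
    have hkey : Dπ a.1 ((Γ a).2) + D2 a.1 a.2 a.2 = 0 := by
      have hc : HasFDerivAt (fun y : Q × Q => Dπ y.1)
          ((D2 a.1).comp (ContinuousLinearMap.fst ℝ Q Q)) a :=
        ((hDπ.differentiable (by simp) a.1).hasFDerivAt).comp a hasFDerivAt_fst
      have hΦ := hc.clm_apply (hasFDerivAt_snd (𝕜 := ℝ) (p := a))
      have ht := htangent a hav
      rw [hΦ.fderiv] at ht
      simp only [ContinuousLinearMap.add_apply, ContinuousLinearMap.comp_apply,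
        ContinuousLinearMap.flip_apply, ContinuousLinearMap.coe_fst',
        ContinuousLinearMap.coe_snd', hSODE a hav] at ht
      exact ht
    have hFa : F a = (Γ a).2 := by
      simp only [hFdef, hpa, hkey, map_zero, sub_zero]
    have : Ξ a = (a.2, (Γ a).2) := by rw [hΞdef]; simp [hFa]
    rw [this, ← hSODE a hav]
  refine ⟨W, hWopen, hq₀W, Ξ, hΞcd, fun p _ => rfl, hagree, ?_⟩
  -- trajectories
  intro h h0 σ w hσW hode hclose
  set v : ℝ → M := fun t => Dπ (σ t) (w t) with hvdef
  have hv0 : ∀ t ∈ Icc (0:ℝ) h, HasDerivAt v 0 t := by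
    intro t ht
    have hc : HasDerivAt (fun s => Dπ (σ s)) (D2 (σ t) (w t)) t :=
      ((hDπ.differentiable (by simp) (σ t)).hasFDerivAt).comp_hasDerivAt t (hode t ht).1
    have hd := hc.clm_apply (hode t ht).2
    have hz : D2 (σ t) (w t) (w t) + Dπ (σ t) ((Ξ (σ t, w t)).2) = 0 := by
      have : (Ξ (σ t, w t)).2 = F (σ t, w t) := rfl
      rw [this, hAF (σ t, w t) (hσW t ht)]
      abel
    rwa [hz] at hd
  have hvconst := const_of_hasDerivAt_zero hv0
  have hπσ : ∀ t ∈ Icc (0:ℝ) h, HasDerivAt (fun s => π (σ s)) (v t) t := fun t ht =>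
    (hπd (σ t)).hasFDerivAt.comp_hasDerivAt t (hode t ht).1
  -- show v 0 = 0 using closedness
  have hc0 : v 0 = 0 := by
    set c : M := v 0 with hcdef
    have hg2 : ∀ t ∈ Icc (0:ℝ) h, HasDerivAt (fun s => π (σ s) - s • c) 0 t := by
      intro t ht
      have hsm : HasDerivAt (fun s : ℝ => s • c) c t := by
        simpa using (hasDerivAt_id t).smul_const c
      have := (hπσ t ht).sub hsm
      rwa [hvconst t ht, sub_self] at this
    have := const_of_hasDerivAt_zero hg2 h ⟨h0.le, le_refl h⟩
    simp only [zero_smul, sub_zero, ← hclose] at this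
    have hhc : h • c = 0 := sub_eq_self.mp this
    rcases smul_eq_zero.mp hhc with h1 | h1
    · exact absurd h1 (ne_of_gt h0)
    · exact h1
  have hvzero : ∀ t ∈ Icc (0:ℝ) h, v t = 0 := fun t ht => (hvconst t ht).trans hc0
  refine ⟨?_, hvzero, ?_⟩
  · -- π ∘ σ constant
    have : ∀ t ∈ Icc (0:ℝ) h, HasDerivAt (fun s => π (σ s)) 0 t := fun t ht => by
      have := hπσ t ht; rwa [hvzero t ht] at this
    exact const_of_hasDerivAt_zero this
  · intro t ht
    have hmem : (σ t, w t) ∈ (W ×ˢ (univ : Set Q)) ∩ {p : Q × Q | Dπ p.1 p.2 = 0} :=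
      ⟨⟨hσW t ht, mem_univ _⟩, hvzero t ht⟩
    have := (hode t ht).2
    rwa [hagree _ hmem] at this
end

section
/- Let τ₁ : E₁ → Q₁ and τ₂ : E₂ → Q₂ be Lie algebroids and Ψ : E₁ → E₂ a Lie algebroid morphism which is fiberwise bijective. Then for every SODE vector field Γ₂ on E₂ there exists a unique SODE vector field Γ₁ on E₁ such that TΨ ∘ Γ₁ = Γ₂ ∘ Ψ. -/
open Set Metric Function

/-- A Lie algebroid `τ : E → Q` in the local (trivialized) model: the base `M`
and the fiber `V` are finite-dimensional real vector spaces, the total space is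
`M × V`, the anchor is a smooth bundle map `ρ : M × V → TM = M`, and the bracket
on sections satisfies skew-symmetry, the Jacobi identity, the Leibniz rule and
compatibility with the anchor (for smooth sections). -/
structure TrivLieAlgebroid (M V : Type*)
    [NormedAddCommGroup M] [NormedSpace ℝ M]
    [NormedAddCommGroup V] [NormedSpace ℝ V] where
  ρ : M → V →L[ℝ] M
  smooth_ρ : ContDiff ℝ (⊤ : ℕ∞) (fun p : M × V => ρ p.1 p.2)
  bracket : (M → V) → (M → V) → (M → V)
  antisymm : ∀ X Y, bracket X Y = -bracket Y X
  jacobi : ∀ X Y Z, ContDiff ℝ (⊤ : ℕ∞) X → ContDiff ℝ (⊤ : ℕ∞) Y → ContDiff ℝ (⊤ : ℕ∞) Z →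
    (fun m => bracket X (bracket Y Z) m + bracket Y (bracket Z X) m +
      bracket Z (bracket X Y) m) = 0
  leibniz : ∀ X Y (f : M → ℝ), ContDiff ℝ (⊤ : ℕ∞) X → ContDiff ℝ (⊤ : ℕ∞) Y → ContDiff ℝ (⊤ : ℕ∞) f →
    bracket X (fun m => f m • Y m) =
      fun m => f m • bracket X Y m + (fderiv ℝ f m (ρ m (X m))) • Y m
  anchor_bracket : ∀ X Y, ContDiff ℝ (⊤ : ℕ∞) X → ContDiff ℝ (⊤ : ℕ∞) Y →
    ∀ m, ρ m (bracket X Y m) =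
      fderiv ℝ (fun m' => ρ m' (Y m')) m (ρ m (X m)) -
        fderiv ℝ (fun m' => ρ m' (X m')) m (ρ m (Y m))

/-- Proposition 3.2: lifting SODEs along fiberwise bijective
morphisms. -/
theorem stmt_13 (M₁ V₁ M₂ V₂ : Type*)
    [NormedAddCommGroup M₁] [NormedSpace ℝ M₁] [FiniteDimensional ℝ M₁]
    [NormedAddCommGroup V₁] [NormedSpace ℝ V₁] [FiniteDimensional ℝ V₁]
    [NormedAddCommGroup M₂] [NormedSpace ℝ M₂] [FiniteDimensional ℝ M₂]
    [NormedAddCommGroup V₂] [NormedSpace ℝ V₂] [FiniteDimensional ℝ V₂]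
    (A₁ : TrivLieAlgebroid M₁ V₁) (A₂ : TrivLieAlgebroid M₂ V₂)
    (ψ : M₁ → M₂) (Ψ : M₁ → V₁ →L[ℝ] V₂)
    (hψ : ContDiff ℝ (⊤ : ℕ∞) ψ) (hΨ : ContDiff ℝ (⊤ : ℕ∞) (fun p : M₁ × V₁ => Ψ p.1 p.2))
    -- `Ψ̂` is a morphism of Lie algebroids over `ψ`: it intertwines the anchors
    (hanchor : ∀ (m : M₁) (v : V₁), A₂.ρ (ψ m) (Ψ m v) = fderiv ℝ ψ m (A₁.ρ m v))
    -- `Ψ̂` is fiberwise bijective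
    (hbij : ∀ m : M₁, Function.Bijective (Ψ m))
    (Γ₂ : M₂ × V₂ → M₂ × V₂) (hΓ₂s : ContDiff ℝ (⊤ : ℕ∞) Γ₂)
    (hΓ₂ : ∀ a : M₂ × V₂, (Γ₂ a).1 = A₂.ρ a.1 a.2) :
    ∃! Γ₁ : M₁ × V₁ → M₁ × V₁,
      ContDiff ℝ (⊤ : ℕ∞) Γ₁ ∧
      (∀ a : M₁ × V₁, (Γ₁ a).1 = A₁.ρ a.1 a.2) ∧
      (∀ a : M₁ × V₁,
        fderiv ℝ (fun p : M₁ × V₁ => (ψ p.1, Ψ p.1 p.2)) a (Γ₁ a) =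
          Γ₂ (ψ a.1, Ψ a.1 a.2)) := by
  classical
  set F : M₁ × V₁ → V₂ := fun p => Ψ p.1 p.2 with hFdef
  have hF : ContDiff ℝ (⊤ : ℕ∞) F := hΨ
  set G : M₁ × V₁ → M₂ × V₂ := fun p => (ψ p.1, Ψ p.1 p.2) with hGdef
  -- fiberwise continuous linear equivalences
  let eΨ : M₁ → V₁ ≃L[ℝ] V₂ := fun m =>
    (LinearEquiv.ofBijective (Ψ m : V₁ →ₗ[ℝ] V₂) (hbij m)).toContinuousLinearEquiv
  have heΨ : ∀ m, ((eΨ m : V₁ →L[ℝ] V₂)) = Ψ m := by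
    intro m; ext v; rfl
  -- the full derivative of `G`
  have hGd : ∀ a : M₁ × V₁, HasFDerivAt G
      (((fderiv ℝ ψ a.1).comp (ContinuousLinearMap.fst ℝ M₁ V₁)).prod (fderiv ℝ F a)) a := by
    intro a
    exact (((hψ.differentiable (by simp) a.1).hasFDerivAt).comp a (hasFDerivAt_fst)).prodMk
      ((hF.differentiable (by simp) a).hasFDerivAt)
  have hGfd : ∀ (a : M₁ × V₁) (X : M₁ × V₁),
      fderiv ℝ G a X = (fderiv ℝ ψ a.1 X.1, fderiv ℝ F a X) := by
    intro a X; rw [(hGd a).fderiv]; rfl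
  -- the partial derivative of `F` in the fiber direction is `Ψ`
  have hFsnd : ∀ (a : M₁ × V₁) (w : V₁), fderiv ℝ F a (0, w) = Ψ a.1 w := by
    intro a w
    have h1 : HasFDerivAt (fun v : V₁ => F (a.1, v))
        ((fderiv ℝ F a).comp (ContinuousLinearMap.inr ℝ M₁ V₁)) a.2 :=
      (show HasFDerivAt F (fderiv ℝ F a) (a.1, id a.2) from (hF.differentiable (by simp) a).hasFDerivAt).comp a.2
        ((hasFDerivAt_const a.1 a.2).prodMk (hasFDerivAt_id a.2))
    have h2 : HasFDerivAt (fun v : V₁ => F (a.1, v)) (Ψ a.1) a.2 :=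
      (Ψ a.1).hasFDerivAt
    have h3 := h1.unique h2
    calc fderiv ℝ F a (0, w)
        = ((fderiv ℝ F a).comp (ContinuousLinearMap.inr ℝ M₁ V₁)) w := rfl
      _ = Ψ a.1 w := by rw [h3]
  have hFsplit : ∀ (a : M₁ × V₁) (X : M₁ × V₁),
      fderiv ℝ F a X = fderiv ℝ F a (X.1, 0) + Ψ a.1 X.2 := by
    intro a X
    rw [← hFsnd a X.2, ← ContinuousLinearMap.map_add]
    congr 1
    simp
  -- smoothness of `m ↦ Ψ m` as a map into continuous linear maps
  have hΨmap : ContDiff ℝ (⊤ : ℕ∞) (fun m : M₁ => Ψ m) := by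
    have h1 : ContDiff ℝ (⊤ : ℕ∞) (fun m : M₁ => fderiv ℝ F (m, 0)) :=
      (hF.fderiv_right (by simp)).comp (contDiff_id.prodMk contDiff_const)
    have h2 : ContDiff ℝ (⊤ : ℕ∞) (fun m : M₁ =>
        (fderiv ℝ F (m, 0)).comp (ContinuousLinearMap.inr ℝ M₁ V₁)) :=
      h1.clm_comp contDiff_const
    convert h2 using 2 with m
    ext w
    exact (hFsnd (m, 0) w).symm
  -- smoothness of the fiberwise inverse
  have hinv : ContDiff ℝ (⊤ : ℕ∞) (fun m : M₁ => ContinuousLinearMap.inverse (Ψ m)) := by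
    rw [contDiff_iff_contDiffAt]
    intro m
    have h := (contDiffAt_map_inverse (eΨ m)).comp m (hΨmap.contDiffAt (x := m))
    exact h
  have hinv_eq : ∀ m, ContinuousLinearMap.inverse (Ψ m) = ((eΨ m).symm : V₂ →L[ℝ] V₁) := by
    intro m
    rw [← heΨ m, ContinuousLinearMap.inverse_equiv]
  -- the candidate SODE on `E₁`
  set Γ₁ : M₁ × V₁ → M₁ × V₁ := fun a =>
    (A₁.ρ a.1 a.2, ContinuousLinearMap.inverse (Ψ a.1)
      ((Γ₂ (G a)).2 - fderiv ℝ F a (A₁.ρ a.1 a.2, 0))) with hΓ₁def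
  have hGsmooth : ContDiff ℝ (⊤ : ℕ∞) G := (hψ.comp contDiff_fst).prodMk hΨ
  -- the key algebraic equivalence characterizing the fiber component
  have key : ∀ (a : M₁ × V₁) (w : V₁),
      fderiv ℝ F a (A₁.ρ a.1 a.2, w) = (Γ₂ (G a)).2 ↔
        w = ContinuousLinearMap.inverse (Ψ a.1)
          ((Γ₂ (G a)).2 - fderiv ℝ F a (A₁.ρ a.1 a.2, 0)) := by
    intro a w
    rw [hinv_eq, ContinuousLinearEquiv.coe_coe, ContinuousLinearEquiv.eq_symm_apply,
      hFsplit a (A₁.ρ a.1 a.2, w)]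
    have : ((eΨ a.1) : V₁ →L[ℝ] V₂) w = Ψ a.1 w := by rw [heΨ]
    rw [show (eΨ a.1) w = Ψ a.1 w from this]
    constructor
    · intro h; rw [← h]; abel
    · intro h; rw [eq_comm, sub_eq_iff_eq_add] at h; rw [h]; abel
  -- the first component of `Γ₂ ∘ G`
  have hfirst : ∀ a : M₁ × V₁, (Γ₂ (G a)).1 = fderiv ℝ ψ a.1 (A₁.ρ a.1 a.2) := by
    intro a
    rw [hΓ₂ (G a)]
    exact hanchor a.1 a.2
  refine ⟨Γ₁, ⟨?_, ?_, ?_⟩, ?_⟩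
  · -- smoothness of Γ₁
    refine (A₁.smooth_ρ).prodMk ?_
    refine ContDiff.clm_apply (hinv.comp contDiff_fst) ?_
    refine ContDiff.sub ((hΓ₂s.comp hGsmooth).snd) ?_
    exact (hF.fderiv_right (by simp)).clm_apply ((A₁.smooth_ρ).prodMk contDiff_const)
  · intro a; rfl
  · intro a
    have hG2 : (ψ a.1, Ψ a.1 a.2) = G a := rfl
    rw [hG2, hGfd a (Γ₁ a)]
    have h1 : (Γ₁ a).1 = A₁.ρ a.1 a.2 := rfl
    refine Prod.ext ?_ ?_
    · simp only [h1, hfirst a]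
    · show fderiv ℝ F a (Γ₁ a) = (Γ₂ (G a)).2
      have : Γ₁ a = (A₁.ρ a.1 a.2, (Γ₁ a).2) := rfl
      rw [this]
      exact (key a (Γ₁ a).2).mpr rfl
  · -- uniqueness
    intro Γ' ⟨hΓ's, hΓ'1, hΓ'2⟩
    funext a
    have hG2 : (ψ a.1, Ψ a.1 a.2) = G a := rfl
    have h := hΓ'2 a
    rw [hG2, hGfd a (Γ' a)] at h
    have hsnd : fderiv ℝ F a (Γ' a) = (Γ₂ (G a)).2 := congrArg Prod.snd h
    have hfst : (Γ' a).1 = A₁.ρ a.1 a.2 := hΓ'1 a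
    have hsplit : Γ' a = (A₁.ρ a.1 a.2, (Γ' a).2) := by
      rw [← hfst]
    rw [hsplit] at hsnd
    have := (key a (Γ' a).2).mp hsnd
    rw [hsplit, this]
end
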